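/- Let α be a type with decidable equality and let C be the default alignment cost function. For all lists A B : List α there exists a list l that is a subsequence (List.Sublist) of both A and B such that levenshtein C A B + 2 * l.length = A.length + B.length. (Together with the upper bound for all common subsequences, this says the algorithm with the default cost finds a longest common subsequence: the edit distance equals |A| + |B| − 2·L where L is the length of a longest common subsequence of A and B.) -/

import Mathlib

/-- Costs for the edit distance (formerly `Mathlib.Data.List.EditDistance.Defs`). -/
structure Levenshtein.Cost (α β δ : Type*) where
  /-- Cost to delete an element from a list. -/
  delete : α → δ
  /-- Cost in insert an element into a list. -/
  insert : β → δ
  /-- Cost to substitute one element for another in a list. -/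
  substitute : α → β → δ

/-- Inner loop of the Wagner–Fischer algorithm (formerly in Mathlib). -/
def Levenshtein.impl {α β δ : Type*} [AddZeroClass δ] [Min δ]
    (C : Levenshtein.Cost α β δ) (xs : List α) (y : β) (d : {r : List δ // 0 < r.length}) :
    {r : List δ // 0 < r.length} :=
  let ⟨ds, w⟩ := d
  xs.zip (ds.zip ds.tail) |>.foldr
    (init := ⟨[C.insert y + ds.getLast (List.ne_nil_of_length_pos w)], by simp⟩)
    (fun ⟨x, d₀, d₁⟩ ⟨r, w⟩ =>
      ⟨min (C.delete x + r[0]) (min (C.insert y + d₀) (C.substitute x y + d₁)) :: r, by simp⟩)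

/-- Edit distances between `xs` and all suffixes of `ys` (formerly in Mathlib). -/
def suffixLevenshtein {α β δ : Type*} [AddZeroClass δ] [Min δ]
    (C : Levenshtein.Cost α β δ) (xs : List α) (ys : List β) :
    {r : List δ // 0 < r.length} :=
  ys.foldr
    (Levenshtein.impl C xs)
    (xs.foldr (init := ⟨[0], by simp⟩) (fun a ⟨r, w⟩ => ⟨(C.delete a + r[0]) :: r, by simp⟩))

/-- The edit distance with cost structure `C` (formerly in Mathlib). -/
def levenshtein {α β δ : Type*} [AddZeroClass δ] [Min δ]
    (C : Levenshtein.Cost α β δ) (xs : List α) (ys : List β) : δ :=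
  let ⟨r, w⟩ := suffixLevenshtein C xs ys
  r[0]

/-- Recursive specification of the edit distance. -/
def levRec {α β δ : Type*} [AddZeroClass δ] [Min δ] (C : Levenshtein.Cost α β δ) :
    List α → List β → δ
  | [], [] => 0
  | x :: xs, [] => C.delete x + levRec C xs []
  | [], y :: ys => C.insert y + levRec C [] ys
  | x :: xs, y :: ys => min (C.delete x + levRec C xs (y :: ys))
      (min (C.insert y + levRec C (x :: xs) ys) (C.substitute x y + levRec C xs ys))

theorem suffixLevenshtein_nil_eq {α β δ : Type*} [AddZeroClass δ] [Min δ]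
    (C : Levenshtein.Cost α β δ) : ∀ xs : List α,
    (suffixLevenshtein C xs ([] : List β)).1 = xs.tails.map (fun t => levRec C t [])
  | [] => by
    show [(0 : δ)] = [levRec C [] []]
    rw [levRec]
  | x :: xs => by
    have ih := suffixLevenshtein_nil_eq C xs
    have key : (suffixLevenshtein C (x :: xs) ([] : List β)).1 =
        (C.delete x + (suffixLevenshtein C xs ([] : List β)).1[0]'(suffixLevenshtein C xs []).2)
          :: (suffixLevenshtein C xs ([] : List β)).1 := rfl
    rw [key]
    simp only [ih]
    cases xs <;> simp [List.tails, levRec]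

theorem impl_eq_tails {α β δ : Type*} [AddZeroClass δ] [Min δ]
    (C : Levenshtein.Cost α β δ) (y : β) : ∀ (xs : List α) (ys : List β)
    (d : {r : List δ // 0 < r.length}), d.1 = xs.tails.map (fun t => levRec C t ys) →
    (Levenshtein.impl C xs y d).1 = xs.tails.map (fun t => levRec C t (y :: ys))
  | _, _, ⟨[], w⟩, _ => by simp at w
  | [], ys, ⟨d0 :: ds, w⟩, h => by
    simp at h
    obtain ⟨h0, h1⟩ := h
    subst h0 h1
    simp [Levenshtein.impl, levRec]
  | x :: xs, ys, ⟨[d0], w⟩, h => by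
    cases xs <;> simp [List.tails] at h
  | x :: xs, ys, ⟨d0 :: d1 :: ds, w⟩, h => by
    have ih := impl_eq_tails C y xs ys ⟨d1 :: ds, by simp⟩
    simp only [List.tails, List.map_cons, List.cons.injEq] at h
    obtain ⟨h0, h1⟩ := h
    specialize ih h1
    have key : (Levenshtein.impl C (x :: xs) y ⟨d0 :: d1 :: ds, w⟩).1 =
        min (C.delete x + (Levenshtein.impl C xs y ⟨d1 :: ds, by simp⟩).1[0]'
            (Levenshtein.impl C xs y ⟨d1 :: ds, by simp⟩).2)
          (min (C.insert y + d0) (C.substitute x y + d1))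
          :: (Levenshtein.impl C xs y ⟨d1 :: ds, by simp⟩).1 := rfl
    rw [key]
    simp only [ih]
    cases xs with
    | nil =>
      simp [List.tails] at h1
      simp [List.tails, levRec, h0, h1.1]
    | cons x' xs =>
      simp only [List.tails, List.map_cons, List.cons.injEq] at h1
      simp [List.tails, levRec, h0, h1.1]

theorem suffixLevenshtein_eq_tails {α β δ : Type*} [AddZeroClass δ] [Min δ]
    (C : Levenshtein.Cost α β δ) (xs : List α) : ∀ ys : List β,
    (suffixLevenshtein C xs ys).1 = xs.tails.map (fun t => levRec C t ys)
  | [] => suffixLevenshtein_nil_eq C xs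
  | y :: ys => impl_eq_tails C y xs ys _ (suffixLevenshtein_eq_tails C xs ys)

theorem levenshtein_eq_levRec {α β δ : Type*} [AddZeroClass δ] [Min δ]
    (C : Levenshtein.Cost α β δ) (xs : List α) (ys : List β) :
    levenshtein C xs ys = levRec C xs ys := by
  have key : levenshtein C xs ys =
      (suffixLevenshtein C xs ys).1[0]'(suffixLevenshtein C xs ys).2 := rfl
  rw [key]
  simp only [suffixLevenshtein_eq_tails]
  cases xs <;> simp [List.tails]

theorem levenshtein_nil_nil {α β δ : Type*} [AddZeroClass δ] [Min δ]
    (C : Levenshtein.Cost α β δ) : levenshtein C ([] : List α) ([] : List β) = 0 := by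
  rw [levenshtein_eq_levRec]; rw [levRec]

theorem levenshtein_nil_cons {α β δ : Type*} [AddZeroClass δ] [Min δ]
    (C : Levenshtein.Cost α β δ) (y : β) (ys : List β) :
    levenshtein C ([] : List α) (y :: ys) = C.insert y + levenshtein C [] ys := by
  rw [levenshtein_eq_levRec, levenshtein_eq_levRec]; rw [levRec]

theorem levenshtein_cons_nil {α β δ : Type*} [AddZeroClass δ] [Min δ]
    (C : Levenshtein.Cost α β δ) (x : α) (xs : List α) :
    levenshtein C (x :: xs) ([] : List β) = C.delete x + levenshtein C xs [] := by
  rw [levenshtein_eq_levRec, levenshtein_eq_levRec]; rw [levRec]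

theorem levenshtein_cons_cons {α β δ : Type*} [AddZeroClass δ] [Min δ]
    (C : Levenshtein.Cost α β δ) (x : α) (xs : List α) (y : β) (ys : List β) :
    levenshtein C (x :: xs) (y :: ys) =
      min (C.delete x + levenshtein C xs (y :: ys))
        (min (C.insert y + levenshtein C (x :: xs) ys)
          (C.substitute x y + levenshtein C xs ys)) := by
  simp only [levenshtein_eq_levRec]; rw [levRec]

/-- The default alignment cost function: deletion and insertion cost 1,
substitution costs 0 for equal words and 2 for distinct words. -/
def alignCost {α : Type*} [DecidableEq α] : Levenshtein.Cost α α ℕ where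
  delete _ := 1
  insert _ := 1
  substitute a b := if a = b then 0 else 2

lemma alignCost_delete {α : Type*} [DecidableEq α] (a : α) :
    (alignCost : Levenshtein.Cost α α ℕ).delete a = 1 := rfl

lemma alignCost_insert {α : Type*} [DecidableEq α] (a : α) :
    (alignCost : Levenshtein.Cost α α ℕ).insert a = 1 := rfl

lemma alignCost_substitute {α : Type*} [DecidableEq α] (a b : α) :
    (alignCost : Levenshtein.Cost α α ℕ).substitute a b = if a = b then 0 else 2 := rfl

lemma alignCost_nil_left {α : Type*} [DecidableEq α] (B : List α) :
    levenshtein alignCost [] B = B.length := by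
  induction B with
  | nil => simp [levenshtein_nil_nil]
  | cons b B ih => rw [levenshtein_nil_cons, ih, alignCost_insert]; simp; omega

lemma alignCost_nil_right {α : Type*} [DecidableEq α] (A : List α) :
    levenshtein alignCost A [] = A.length := by
  induction A with
  | nil => simp [levenshtein_nil_nil]
  | cons a A ih => rw [levenshtein_cons_nil, ih, alignCost_delete]; simp; omega

theorem exists_common_sublist_levenshtein_add_two_mul_length_eq
    {α : Type*} [DecidableEq α] (A B : List α) :
    ∃ l : List α, l.Sublist A ∧ l.Sublist B ∧
      levenshtein alignCost A B + 2 * l.length = A.length + B.length := by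
  induction A generalizing B with
  | nil =>
    exact ⟨[], List.nil_sublist _, List.nil_sublist _, by simp [alignCost_nil_left]⟩
  | cons a A ihA =>
    induction B with
    | nil =>
      exact ⟨[], List.nil_sublist _, List.nil_sublist _, by rw [alignCost_nil_right]; simp⟩
    | cons b B ihB =>
      obtain ⟨l1, h1A, h1B, h1⟩ := ihA (b :: B)
      obtain ⟨l2, h2A, h2B, h2⟩ := ihB
      obtain ⟨l3, h3A, h3B, h3⟩ := ihA B
      by_cases hab : a = b
      · subst hab
        rcases le_or_gt (levenshtein alignCost A B)
            (min (1 + levenshtein alignCost A (a :: B))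
              (1 + levenshtein alignCost (a :: A) B)) with h | h
        · refine ⟨a :: l3, h3A.cons₂ a, h3B.cons₂ a, ?_⟩
          rw [levenshtein_cons_cons, alignCost_delete, alignCost_insert,
            alignCost_substitute, if_pos rfl]
          simp only [List.length_cons]
          omega
        · rcases le_total (1 + levenshtein alignCost A (a :: B))
              (1 + levenshtein alignCost (a :: A) B) with h' | h'
          · refine ⟨l1, h1A.cons a, h1B, ?_⟩
            rw [levenshtein_cons_cons, alignCost_delete, alignCost_insert,
              alignCost_substitute, if_pos rfl]
            simp only [List.length_cons] at *
            omega
          · refine ⟨l2, h2A, h2B.cons a, ?_⟩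
            rw [levenshtein_cons_cons, alignCost_delete, alignCost_insert,
              alignCost_substitute, if_pos rfl]
            simp only [List.length_cons] at *
            omega
      · rcases le_or_gt (2 + levenshtein alignCost A B)
            (min (1 + levenshtein alignCost A (b :: B))
              (1 + levenshtein alignCost (a :: A) B)) with h | h
        · refine ⟨l3, h3A.cons a, h3B.cons b, ?_⟩
          rw [levenshtein_cons_cons, alignCost_delete, alignCost_insert,
            alignCost_substitute, if_neg hab]
          simp only [List.length_cons] at *
          omega
        · rcases le_total (1 + levenshtein alignCost A (b :: B))
              (1 + levenshtein alignCost (a :: A) B) with h' | h'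
          · refine ⟨l1, h1A.cons a, h1B, ?_⟩
            rw [levenshtein_cons_cons, alignCost_delete, alignCost_insert,
              alignCost_substitute, if_neg hab]
            simp only [List.length_cons] at *
            omega
          · refine ⟨l2, h2A, h2B.cons b, ?_⟩
            rw [levenshtein_cons_cons, alignCost_delete, alignCost_insert,
              alignCost_substitute, if_neg hab]
            simp only [List.length_cons] at *
            omega
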